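/- Let 𝒜 be a unital C*-algebra, (V, V⁺, e) an AOU 𝒜-space, S an operator 𝒜-system, and φ: V → S a positive 𝒜-bimodule map. Then φ is completely positive as a map from the maximal structure: φ^{(n)}(C_n^{max}(V;𝒜)) ⊆ M_n(S)⁺ for every n ∈ ℕ. -/

import Mathlib

open Matrix

noncomputable section

/-- An AOU `𝒜`-space: an Archimedean order unit *-vector space `(V, pos, e)` which is an
`A`-bimodule (actions `l`, `r`) satisfying `(a·x)* = x*·a*`, `a·e = e·a` and
`a*·x·a ∈ V⁺` for `x ∈ V⁺`. -/
structure AOUPack (A V : Type*) [Ring A] [StarRing A] [Algebra ℂ A]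
    [AddCommGroup V] [Module ℂ V] [StarAddMonoid V] [StarModule ℂ V] where
  /-- the left action `a · x` -/
  l : A → V → V
  /-- the right action `x · a` -/
  r : V → A → V
  /-- the cone `V⁺` of positive elements -/
  pos : Set V
  /-- the Archimedean order unit -/
  e : V
  l_add : ∀ a b x, l (a + b) x = l a x + l b x
  add_l : ∀ a x y, l a (x + y) = l a x + l a y
  smul_l : ∀ (c : ℂ) a x, l (c • a) x = c • l a x
  l_smul : ∀ (c : ℂ) a x, l a (c • x) = c • l a x
  r_add : ∀ x y a, r (x + y) a = r x a + r y a
  add_r : ∀ x a b, r x (a + b) = r x a + r x b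
  smul_r : ∀ (c : ℂ) x a, r (c • x) a = c • r x a
  r_smul : ∀ (c : ℂ) x a, r x (c • a) = c • r x a
  mul_l : ∀ a b x, l (a * b) x = l a (l b x)
  mul_r : ∀ x a b, r x (a * b) = r (r x a) b
  l_r_assoc : ∀ a x b, r (l a x) b = l a (r x b)
  one_l : ∀ x, l 1 x = x
  star_l : ∀ a x, star (l a x) = r (star x) (star a)
  pos_isSelfAdjoint : ∀ x ∈ pos, star x = x
  pos_add_mem : ∀ x ∈ pos, ∀ y ∈ pos, x + y ∈ pos
  pos_smul_mem : ∀ (t : ℝ), 0 ≤ t → ∀ x ∈ pos, (t : ℂ) • x ∈ pos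
  pos_nonempty : pos.Nonempty
  pos_salient : ∀ x ∈ pos, -x ∈ pos → x = 0
  e_isSelfAdjoint : star e = e
  e_orderUnit : ∀ x, star x = x → ∃ t : ℝ, 0 < t ∧ (t : ℂ) • e - x ∈ pos
  e_arch : ∀ x, (∀ t : ℝ, 0 < t → x + (t : ℂ) • e ∈ pos) → x ∈ pos
  e_comm : ∀ a, l a e = r e a
  conj_mem : ∀ a, ∀ x ∈ pos, r (l (star a) x) a ∈ pos

namespace AOUPack

variable {A V : Type*} [Ring A] [StarRing A] [Algebra ℂ A]
  [AddCommGroup V] [Module ℂ V] [StarAddMonoid V] [StarModule ℂ V]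

variable (P : AOUPack A V)

/-- The action of a matrix over `A` on a matrix over `V` from the left:
`(M · X)_{ij} = Σ_p M_{ip} · X_{pj}`. -/
def amul {k m n : ℕ} (M : Matrix (Fin k) (Fin m) A) (X : Matrix (Fin m) (Fin n) V) :
    Matrix (Fin k) (Fin n) V :=
  Matrix.of fun i j => ∑ p, P.l (M i p) (X p j)

/-- The action of a matrix over `A` on a matrix over `V` from the right:
`(X · N)_{ij} = Σ_p X_{ip} · N_{pj}`. -/
def vmul {m n l : ℕ} (X : Matrix (Fin m) (Fin n) V) (N : Matrix (Fin n) (Fin l) A) :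
    Matrix (Fin m) (Fin l) V :=
  Matrix.of fun i j => ∑ p, P.r (X i p) (N p j)

/-- The congruence `M* · X · M` of `X ∈ M_m(V)` by `M ∈ M_{m,n}(A)`. -/
def conj {m n : ℕ} (M : Matrix (Fin m) (Fin n) A) (X : Matrix (Fin m) (Fin m) V) :
    Matrix (Fin n) (Fin n) V :=
  P.vmul (P.amul Mᴴ X) M

/-- The diagonal matrix `e_n ∈ M_n(V)` with all diagonal entries equal to `e`. -/
def matE (n : ℕ) : Matrix (Fin n) (Fin n) V := Matrix.diagonal fun _ => P.e

/-- `C_n^{min}(V; A)`: hermitian `X ∈ M_n(V)` with `C* · X · C ∈ V⁺` for every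
column `C ∈ M_{n,1}(A)`. -/
def Cmin (n : ℕ) : Set (Matrix (Fin n) (Fin n) V) :=
  {X | Xᴴ = X ∧ ∀ C : Matrix (Fin n) (Fin 1) A, P.conj C X 0 0 ∈ P.pos}

/-- `D_n^{max}(V; A)`: finite sums `Σ_i A_i* · x_i · A_i` with `x_i ∈ V⁺` and
`A_i ∈ M_{1,n}(A)`. -/
def Dmax (n : ℕ) : Set (Matrix (Fin n) (Fin n) V) :=
  {X | ∃ (k : ℕ) (x : Fin k → V) (a : Fin k → Matrix (Fin 1) (Fin n) A),
    (∀ i, x i ∈ P.pos) ∧ X = ∑ i, P.conj (a i) (Matrix.of fun _ _ => x i)}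

/-- `C_n^{max}(V; A) = {X : X + r e_n ∈ D_n^{max}(V; A) for all r > 0}`. -/
def Cmax (n : ℕ) : Set (Matrix (Fin n) (Fin n) V) :=
  {X | ∀ t : ℝ, 0 < t → X + (t : ℂ) • P.matE n ∈ P.Dmax n}

/-- `Q` is an operator `A`-system structure on `V`: an `A`-compatible matrix ordering
with `Q 1 = V⁺` such that `e_n` is an Archimedean order unit for `Q n` for every `n`. -/
structure IsOperatorSystemStructure (Q : ∀ n : ℕ, Set (Matrix (Fin n) (Fin n) V)) : Prop where
  herm : ∀ n, ∀ X ∈ Q n, Xᴴ = X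
  add_mem : ∀ n, ∀ X ∈ Q n, ∀ Y ∈ Q n, X + Y ∈ Q n
  smul_mem : ∀ n (t : ℝ), 0 ≤ t → ∀ X ∈ Q n, (t : ℂ) • X ∈ Q n
  nonempty : ∀ n, (Q n).Nonempty
  salient : ∀ n, ∀ X ∈ Q n, -X ∈ Q n → X = 0
  compat : ∀ m n (X : Matrix (Fin m) (Fin m) V) (M : Matrix (Fin m) (Fin n) A),
    X ∈ Q m → P.conj M X ∈ Q n
  level_one : ∀ X : Matrix (Fin 1) (Fin 1) V, X ∈ Q 1 ↔ X 0 0 ∈ P.pos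
  orderUnit : ∀ n (X : Matrix (Fin n) (Fin n) V), Xᴴ = X →
    ∃ t : ℝ, 0 < t ∧ (t : ℂ) • P.matE n - X ∈ Q n
  arch : ∀ n (X : Matrix (Fin n) (Fin n) V),
    (∀ t : ℝ, 0 < t → X + (t : ℂ) • P.matE n ∈ Q n) → X ∈ Q n

end AOUPack

/-!
A bimodule map sends a generator `A* · x · A` of `D_n^max` to `A* · φ(x) · A`, which lies in
`M_n(S)⁺` by `𝒜`-compatibility once `φ(x) ∈ S⁺`; hence `φ⁽ⁿ⁾(X + t e_n) ∈ M_n(S)⁺` for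
`X ∈ C_n^max` and `t > 0`. As `φ(e) ≤ c e` in `S`, the diagonal matrix with entries `φ(e)` is
dominated by `c e_n` (a diagonal matrix with positive entries is a sum of conjugates
`E_j* · y · E_j` by the unit rows `E_j`), and the Archimedean property of `e_n` concludes.
-/

namespace AOUPack

section Bimodule

variable {A V : Type*} [Ring A] [StarRing A] [Algebra ℂ A]
  [AddCommGroup V] [Module ℂ V] [StarAddMonoid V] [StarModule ℂ V]
  (P : AOUPack A V)

theorem l_zero (x : V) : P.l 0 x = 0 := by
  simpa using P.smul_l 0 0 x

theorem r_zero (a : A) : P.r 0 a = 0 := by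
  simpa using P.smul_r 0 0 a

theorem zero_r (x : V) : P.r x 0 = 0 := by
  simpa using P.r_smul 0 x 0

theorem one_r (x : V) : P.r x 1 = x := by
  simpa [P.one_l] using (P.star_l 1 (star x)).symm

theorem e_mem_pos : P.e ∈ P.pos := by
  obtain ⟨t, ht, hte⟩ := P.e_orderUnit (-P.e) (by simp [P.e_isSelfAdjoint])
  have hscale := P.pos_smul_mem (t + 1)⁻¹ (by positivity) _ hte
  have hsum : (t : ℂ) • P.e - -P.e = ((t + 1 : ℝ) : ℂ) • P.e := by
    push_cast
    module
  rwa [hsum, smul_smul, ← Complex.ofReal_mul, inv_mul_cancel₀ (by positivity),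
    Complex.ofReal_one, one_smul] at hscale

theorem conj_row_apply {n : ℕ} (M : Matrix (Fin 1) (Fin n) A) (y : V) (i k : Fin n) :
    P.conj M (Matrix.of fun _ _ => y) i k = P.r (P.l (star (M 0 i)) y) (M 0 k) := by
  simp [conj, vmul, amul]

theorem conj_single_apply {n : ℕ} (j : Fin n) (y : V) (i k : Fin n) :
    P.conj (Matrix.single (0 : Fin 1) j 1) (Matrix.of fun _ _ => y) i k =
      if i = j ∧ k = j then y else 0 := by
  rw [conj_row_apply]
  by_cases hij : i = j
  · subst hij
    by_cases hki : k = i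
    · simp [hki, P.one_l, P.one_r]
    · simp [hki, Ne.symm hki, P.one_l, P.zero_r]
  · simp [Matrix.single_apply, hij, Ne.symm hij, P.l_zero, P.r_zero]

theorem diagonal_eq_sum_conj_single {n : ℕ} (y : V) :
    Matrix.diagonal (fun _ : Fin n => y) =
      ∑ j, P.conj (Matrix.single (0 : Fin 1) j 1) (Matrix.of fun _ _ => y) := by
  ext i k
  simp only [Matrix.sum_apply, conj_single_apply, Matrix.diagonal_apply]
  by_cases hik : i = k
  · subst hik
    simp
  · rw [if_neg hik]
    exact (Finset.sum_eq_zero fun j _ => if_neg fun h => hik (h.1.trans h.2.symm)).symm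

theorem diagonal_mem_Dmax {n : ℕ} {y : V} (hy : y ∈ P.pos) :
    Matrix.diagonal (fun _ : Fin n => y) ∈ P.Dmax n :=
  ⟨n, fun _ => y, fun j => Matrix.single (0 : Fin 1) j 1, fun _ => hy,
    P.diagonal_eq_sum_conj_single y⟩

theorem matE_map {W : Type*} [AddCommGroup W] [Module ℂ W] (φ : V →ₗ[ℂ] W) (n : ℕ) :
    (P.matE n).map φ = Matrix.diagonal fun _ => φ P.e :=
  Matrix.diagonal_map φ.map_zero

variable {W : Type*} [AddCommGroup W] [Module ℂ W] [StarAddMonoid W] [StarModule ℂ W]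
  (PW : AOUPack A W) (φ : V →ₗ[ℂ] W)

theorem map_conj (hl : ∀ a x, φ (P.l a x) = PW.l a (φ x))
    (hr : ∀ x a, φ (P.r x a) = PW.r (φ x) a) {m n : ℕ} (M : Matrix (Fin m) (Fin n) A)
    (X : Matrix (Fin m) (Fin m) V) : (P.conj M X).map φ = PW.conj M (X.map φ) := by
  ext i j
  simp [conj, vmul, amul, map_sum, hl, hr]

theorem map_mem_Dmax (hl : ∀ a x, φ (P.l a x) = PW.l a (φ x))
    (hr : ∀ x a, φ (P.r x a) = PW.r (φ x) a) (hpos : ∀ x ∈ P.pos, φ x ∈ PW.pos) {n : ℕ}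
    {X : Matrix (Fin n) (Fin n) V} (hX : X ∈ P.Dmax n) : X.map φ ∈ PW.Dmax n := by
  obtain ⟨k, x, a, hx, rfl⟩ := hX
  refine ⟨k, fun i => φ (x i), a, fun i => hpos _ (hx i), ?_⟩
  rw [← φ.mapMatrix_apply, map_sum]
  simp only [LinearMap.mapMatrix_apply, P.map_conj PW φ hl hr]
  rfl

end Bimodule

namespace IsOperatorSystemStructure

variable {A V : Type*} [Ring A] [StarRing A] [Algebra ℂ A]
  [AddCommGroup V] [Module ℂ V] [StarAddMonoid V] [StarModule ℂ V]
  {P : AOUPack A V} {Q : ∀ n : ℕ, Set (Matrix (Fin n) (Fin n) V)}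

theorem zero_mem (hQ : P.IsOperatorSystemStructure Q) (n : ℕ) :
    (0 : Matrix (Fin n) (Fin n) V) ∈ Q n := by
  obtain ⟨X, hX⟩ := hQ.nonempty n
  simpa using hQ.smul_mem n 0 le_rfl X hX

theorem sum_mem (hQ : P.IsOperatorSystemStructure Q) {n : ℕ} {ι : Type*} (s : Finset ι)
    {X : ι → Matrix (Fin n) (Fin n) V} (hX : ∀ i ∈ s, X i ∈ Q n) : ∑ i ∈ s, X i ∈ Q n :=
  Finset.sum_induction _ (· ∈ Q n) (fun X Y hX hY => hQ.add_mem n X hX Y hY) (hQ.zero_mem n) hX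

theorem Dmax_subset (hQ : P.IsOperatorSystemStructure Q) (n : ℕ) : P.Dmax n ⊆ Q n := by
  rintro _ ⟨k, x, a, hx, rfl⟩
  exact hQ.sum_mem _ fun i _ => hQ.compat 1 n _ (a i) ((hQ.level_one _).mpr (hx i))

theorem mem_of_forall_add_smul_diagonal_mem (hQ : P.IsOperatorSystemStructure Q) {n : ℕ}
    {y : V} (hy : y ∈ P.pos) {X : Matrix (Fin n) (Fin n) V}
    (hX : ∀ t : ℝ, 0 < t → X + (t : ℂ) • Matrix.diagonal (fun _ => y) ∈ Q n) : X ∈ Q n := by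
  obtain ⟨c, hc, hcy⟩ := P.e_orderUnit y (P.pos_isSelfAdjoint y hy)
  have hdiag : (c : ℂ) • P.matE n - Matrix.diagonal (fun _ => y) ∈ Q n := by
    rw [matE, ← Matrix.diagonal_smul, Matrix.diagonal_sub]
    exact hQ.Dmax_subset n (P.diagonal_mem_Dmax hcy)
  refine hQ.arch n X fun s hs => ?_
  have hsc : 0 < s / c := div_pos hs hc
  have hsplit : X + (s : ℂ) • P.matE n =
      (X + ((s / c : ℝ) : ℂ) • Matrix.diagonal (fun _ => y)) +
        ((s / c : ℝ) : ℂ) • ((c : ℂ) • P.matE n - Matrix.diagonal (fun _ => y)) := by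
    rw [smul_sub, smul_smul, ← Complex.ofReal_mul, div_mul_cancel₀ _ hc.ne']
    abel
  rw [hsplit]
  exact hQ.add_mem n _ (hX _ hsc) _ (hQ.smul_mem n _ hsc.le _ hdiag)

end IsOperatorSystemStructure

end AOUPack

/-- Theorem 3.9 (i): a positive `𝒜`-bimodule map from `V` into an operator `𝒜`-system
`S` is completely positive as a map from `omax_𝒜(V)`. -/
theorem positive_bimodule_map_from_cmax_completelyPositive
    {A V S : Type*} [CStarAlgebra A]
    [AddCommGroup V] [Module ℂ V] [StarAddMonoid V] [StarModule ℂ V]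
    [AddCommGroup S] [Module ℂ S] [StarAddMonoid S] [StarModule ℂ S]
    (P : AOUPack A V)
    (PS : AOUPack A S) (QS : ∀ n : ℕ, Set (Matrix (Fin n) (Fin n) S))
    (hQS : PS.IsOperatorSystemStructure QS)
    (φ : V →ₗ[ℂ] S)
    (hl : ∀ (a : A) (x : V), φ (P.l a x) = PS.l a (φ x))
    (hr : ∀ (x : V) (a : A), φ (P.r x a) = PS.r (φ x) a)
    (hpos : ∀ x ∈ P.pos, φ x ∈ PS.pos) :
    ∀ n : ℕ, ∀ X ∈ P.Cmax n, X.map φ ∈ QS n := by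
  intro n X hX
  refine hQS.mem_of_forall_add_smul_diagonal_mem (hpos _ P.e_mem_pos) fun t ht => ?_
  have himage := hQS.Dmax_subset n (P.map_mem_Dmax PS φ hl hr hpos (hX t ht))
  rwa [← φ.mapMatrix_apply, map_add, map_smul, φ.mapMatrix_apply, φ.mapMatrix_apply,
    P.matE_map] at himage
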